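/- arXiv:1912.10385 — 5 statements merged into one kernel-verified Lean document; each statement's English description precedes it below -/
import Mathlib

section
/- Let $M$ be a $k \times n$ matrix over a commutative ring, with $k \ge 1$. For column index sequences $a_1, \dots, a_{k+1}$ and $b_1, \dots, b_{k-1}$ in $\{1,\dots,n\}$, the Grassmann–Plücker relation holds: $\sum_{i=1}^{k+1} (-1)^i \det(M_{a_1, \dots, \widehat{a_i}, \dots, a_{k+1}}) \cdot \det(M_{a_i, b_1, \dots, b_{k-1}}) = 0$, where $M_{c_1,\dots,c_k}$ denotes the $k \times k$ matrix whose $j$-th column is column $c_j$ of $M$ and $\widehat{a_i}$ denotes omission of $a_i$. -/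
/-!
Expanding the `(m + 2) × (m + 2)` determinant whose first row is
`(det(M_{aᵢ, b}))ᵢ` and whose remaining rows are those of `M_a` along its first row gives the
Plücker sum up to sign. The minor `det(M_{x, b})` is linear in the column `x`, so that first row
is a linear combination of the rows of `M_a`, and the determinant vanishes.
-/

namespace Matrix

variable {R : Type*} [CommRing R] {m : ℕ}

theorem sum_neg_one_pow_mul_mul_det_submatrix_succAbove_eq_zero
    (A : Matrix (Fin (m + 1)) (Fin (m + 2)) R) (r : Fin (m + 1)) :
    ∑ i : Fin (m + 2), (-1 : R) ^ (i : ℕ) * A r i * (A.submatrix id i.succAbove).det = 0 := by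
  -- Laplace expansion of `A` with its row `r` repeated on top.
  have h := det_zero_of_row_eq (M := of (Fin.cons (A r) A)) (Fin.succ_ne_zero r).symm rfl
  rwa [det_succ_row_zero] at h

theorem sum_neg_one_pow_mul_vecMul_mul_det_submatrix_succAbove_eq_zero
    (A : Matrix (Fin (m + 1)) (Fin (m + 2)) R) (w : Fin (m + 1) → R) :
    ∑ i : Fin (m + 2), (-1 : R) ^ (i : ℕ) * (w ᵥ* A) i * (A.submatrix id i.succAbove).det
      = 0 := by
  simp only [vecMul, dotProduct, Finset.mul_sum, Finset.sum_mul]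
  rw [Finset.sum_comm]
  refine Finset.sum_eq_zero fun r _ => ?_
  rw [← mul_zero (w r), ← sum_neg_one_pow_mul_mul_det_submatrix_succAbove_eq_zero A r,
    Finset.mul_sum]
  exact Finset.sum_congr rfl fun i _ => by ring

theorem det_submatrix_id_cons_eq_dotProduct {n : Type*} (M : Matrix (Fin (m + 1)) n R) (x : n)
    (b : Fin m → n) :
    (M.submatrix id (Fin.cons x b : Fin (m + 1) → n)).det
      = (fun r : Fin (m + 1) => (-1 : R) ^ (r : ℕ) * (M.submatrix r.succAbove b).det)
          ⬝ᵥ fun r => M r x := by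
  rw [det_succ_column_zero, dotProduct]
  refine Finset.sum_congr rfl fun r _ => ?_
  simp only [submatrix_apply, id, Fin.cons_zero, submatrix_submatrix, Function.comp_def,
    Fin.cons_succ]
  ring

end Matrix

open Matrix in
/-- The Grassmann–Plücker relation for maximal minors of a `k × n` matrix (`k = m+1 ≥ 1`)
over a commutative ring: for column sequences `a : Fin (k+1) → Fin n` and
`b : Fin (k-1) → Fin n`,
`∑ i, (-1)^(i+1) det(columns a with aᵢ omitted) · det(columns aᵢ, b) = 0`. -/
theorem stmt_1 {R : Type*} [CommRing R] (m n : ℕ)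
    (M : Matrix (Fin (m + 1)) (Fin n) R)
    (a : Fin (m + 2) → Fin n) (b : Fin m → Fin n) :
    ∑ i : Fin (m + 2), (-1 : R) ^ ((i : ℕ) + 1) *
        (Matrix.of fun r j : Fin (m + 1) => M r (a (i.succAbove j))).det *
        (Matrix.of fun r j : Fin (m + 1) => M r ((Fin.cons (a i) b : Fin (m + 1) → Fin n) j)).det = 0 := by
  have h := sum_neg_one_pow_mul_vecMul_mul_det_submatrix_succAbove_eq_zero (M.submatrix id a)
    fun r => (-1 : R) ^ (r : ℕ) * (M.submatrix r.succAbove b).det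
  rw [← neg_eq_zero, ← Finset.sum_neg_distrib, ← h]
  refine Finset.sum_congr rfl fun i _ => ?_
  change -((-1 : R) ^ ((i : ℕ) + 1) * ((M.submatrix id a).submatrix id i.succAbove).det *
    (M.submatrix id (Fin.cons (a i) b : Fin (m + 1) → Fin n)).det) = _
  rw [det_submatrix_id_cons_eq_dotProduct, pow_succ]
  simp only [vecMul, submatrix_apply, id]
  ring
end

section
/- Let $i_1 \le i_2 \le \cdots \le i_k$ and $j_1 \le j_2 \le \cdots \le j_k$ be sequences in $\{1,\dots,n\}$. The monomial $m = \prod_{l=1}^k x_{1, i_l} x_{2, j_l}$ can be written as a product of $k$ monomials each of the form $x_{1,i} x_{2,j}$ with $i < j$ if and only if $i_l < j_l$ for every $l = 1, \dots, k$. -/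
/-!
Reading off the exponents of the first row of both factorizations shows that the values `i l`
and the first indices of the factors agree as multisets, and likewise for the second row.
If `j l ≤ i l`, count indices below `j l`: at least `l + 1` of the `j`'s, hence of the second
indices of the factors, are `≤ j l`; their partners are first indices `< j l`, so at least `l + 1`
of the `i`'s are `< j l`, whereas monotonicity of `i` allows at most `l`.
-/

open Finset

section FiberCounting

variable {ι α : Type*} [Fintype ι]

lemma card_filter_comp_eq_of_card_fiber_eq [DecidableEq α] {f g : ι → α}
    (h : ∀ a, #{l | f l = a} = #{l | g l = a}) (p : α → Prop) [DecidablePred p] :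
    #{l | p (f l)} = #{l | p (g l)} := by
  have hmap : univ.val.map f = univ.val.map g := by
    ext a
    simpa [Multiset.count_map, eq_comm, card_def] using h a
  simpa [Multiset.countP_map, card_def] using congrArg (Multiset.countP p) hmap

lemma sum_single_add_single_apply_zero [DecidableEq α] (f g : ι → α) (a : α) :
    (∑ l, (Finsupp.single ((0 : Fin 2), f l) 1 + Finsupp.single ((1 : Fin 2), g l) 1) :
      Fin 2 × α →₀ ℕ) (0, a) = #{l | f l = a} := by
  simp [Finsupp.finsetSum_apply, Finsupp.single_apply]

lemma sum_single_add_single_apply_one [DecidableEq α] (f g : ι → α) (a : α) :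
    (∑ l, (Finsupp.single ((0 : Fin 2), f l) 1 + Finsupp.single ((1 : Fin 2), g l) 1) :
      Fin 2 × α →₀ ℕ) (1, a) = #{l | g l = a} := by
  simp [Finsupp.finsetSum_apply, Finsupp.single_apply]

end FiberCounting

section Monotone

variable {α : Type*} [LinearOrder α] {k : ℕ} {f : Fin k → α}

lemma Monotone.succ_le_card_filter_le (hf : Monotone f) (l : Fin k) :
    (l : ℕ) + 1 ≤ #{m | f m ≤ f l} := by
  calc (l : ℕ) + 1 = #(Iic l) := (Fin.card_Iic l).symm
    _ ≤ _ := card_le_card fun m hm => by simpa using hf (mem_Iic.mp hm)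

lemma Monotone.card_filter_lt_le (hf : Monotone f) {a : α} {l : Fin k} (ha : a ≤ f l) :
    #{m | f m < a} ≤ l := by
  calc #{m | f m < a} ≤ #(Iio l) := card_le_card fun m hm => by
        simp only [mem_filter, mem_univ, true_and] at hm
        exact mem_Iio.mpr (lt_of_not_ge fun hlm => (hm.trans_le ha).not_ge (hf hlm))
    _ = l := Fin.card_Iio l

theorem Monotone.lt_of_card_fiber_eq_of_pairing [DecidableEq α] {i j : Fin k → α}
    (hi : Monotone i) (hj : Monotone j) (c : Fin k → α × α) (hc : ∀ m, (c m).1 < (c m).2)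
    (hfst : ∀ a, #{m | i m = a} = #{m | (c m).1 = a})
    (hsnd : ∀ a, #{m | j m = a} = #{m | (c m).2 = a}) (l : Fin k) : i l < j l := by
  by_contra! hji
  have := calc (l : ℕ) + 1 ≤ #{m | j m ≤ j l} := hj.succ_le_card_filter_le l
    _ = #{m | (c m).2 ≤ j l} := card_filter_comp_eq_of_card_fiber_eq hsnd (· ≤ j l)
    _ ≤ #{m | (c m).1 < j l} := card_le_card <| monotone_filter_right _
        fun m _ hm => (hc m).trans_le hm
    _ = #{m | i m < j l} := (card_filter_comp_eq_of_card_fiber_eq hfst (· < j l)).symm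
    _ ≤ l := hi.card_filter_lt_le hji
  omega

end Monotone

/-- For weakly increasing sequences `i₁ ≤ ⋯ ≤ i_k` and `j₁ ≤ ⋯ ≤ j_k` in `{1,…,n}`, the
monomial `∏ l, x₁,(i l) · x₂,(j l)` (recorded as its exponent vector) is a product of `k`
monomials of the form `x₁,ᵢ x₂,ⱼ` with `i < j` if and only if `i l < j l` for every `l`. -/
theorem stmt_3 (n k : ℕ) (i j : Fin k → ℕ)
    (hi : Monotone i) (hj : Monotone j)
    (hin : ∀ l, 1 ≤ i l ∧ i l ≤ n) (hjn : ∀ l, 1 ≤ j l ∧ j l ≤ n) :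
    (∃ c : Fin k → ℕ × ℕ, (∀ l, (c l).1 < (c l).2) ∧ (∀ l, 1 ≤ (c l).1 ∧ (c l).2 ≤ n) ∧
      (∑ l, (Finsupp.single ((0 : Fin 2), i l) 1 + Finsupp.single ((1 : Fin 2), j l) 1)
        : Fin 2 × ℕ →₀ ℕ)
      = ∑ l, (Finsupp.single ((0 : Fin 2), (c l).1) 1
          + Finsupp.single ((1 : Fin 2), (c l).2) 1)) ↔
    ∀ l, i l < j l := by
  constructor
  · rintro ⟨c, hc, -, heq⟩
    refine hi.lt_of_card_fiber_eq_of_pairing hj c hc (fun a => ?_) (fun a => ?_)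
    · simpa only [sum_single_add_single_apply_zero] using DFunLike.congr_fun heq (0, a)
    · simpa only [sum_single_add_single_apply_one] using DFunLike.congr_fun heq (1, a)
  · exact fun h => ⟨fun l => (i l, j l), h, fun l => ⟨(hin l).1, (hjn l).2⟩, rfl⟩
end

section
/- Let $f \in \mathbb{C}[x_1^{\pm 1}, \dots, x_n^{\pm 1}]$, written as $f = \sum_{i \in \mathbb{Z}} C_i(x_1, \dots, x_{n-1}) x_n^i$ where each $C_i$ is a Laurent polynomial in $x_1,\dots,x_{n-1}$. Suppose $h \in \mathbb{C}[x_1^{\pm 1}, \dots, x_{n-1}^{\pm 1}]$ is such that $h^{-i}$ divides $C_i$ (in the Laurent polynomial ring in $x_1,\dots,x_{n-1}$) for every $i < 0$ with $C_i \ne 0$, so that $g := \sum_i h^i C_i x_n^i$ is again a Laurent polynomial. Then for every $k \ge 0$ the constant term of $g^k$ equals the constant term of $f^k$; that is, the classical period is invariant under this mutation. -/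
/-!
Over the localisation at `h`, the mutation `g` is the image of `f` under the ring automorphism
`x_n ↦ h x_n`, which fixes constant terms. To avoid inverting `h` we track instead the relation
"`gᵢ = hⁱ fᵢ` for `i ≥ 0` and `fᵢ = h⁻ⁱ gᵢ` for `i < 0`" between the coefficients, and check
directly that it is preserved by products: in a product term `f_b f'_c` with `b + c = a`, the
powers of `h` attached to `b` and `c` combine, after cancelling opposite signs, into the power
attached to `a`.
-/

open AddMonoidAlgebra

variable {R : Type*} [CommSemiring R]

def IsMutation (h : R) (f g : AddMonoidAlgebra R ℤ) : Prop :=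
  (∀ i : ℤ, 0 ≤ i → g.coeff i = h ^ i.toNat * f.coeff i) ∧
    (∀ i : ℤ, i < 0 → f.coeff i = h ^ (-i).toNat * g.coeff i)

lemma AddMonoidAlgebra.coeff_mul_eq_sum_of_support_subset (x y : AddMonoidAlgebra R ℤ)
    {s : Finset ℤ} (hs : x.coeff.support ⊆ s) (a : ℤ) :
    (x * y).coeff a = ∑ b ∈ s, x.coeff b * y.coeff (-b + a) := by
  rw [coeff_mul_apply_left]
  exact Finsupp.sum_of_support_subset _ hs _ fun _ _ => zero_mul _

namespace IsMutation

variable {h : R} {f f' g g' : AddMonoidAlgebra R ℤ}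

lemma one : IsMutation h (1 : AddMonoidAlgebra R ℤ) 1 := by
  refine ⟨fun i hi => ?_, fun i hi => ?_⟩
  · rcases hi.eq_or_lt with rfl | hi
    · simp
    · rw [one_def, coeff_single, Finsupp.single_eq_of_ne hi.ne', mul_zero]
  · rw [one_def, coeff_single, Finsupp.single_eq_of_ne hi.ne, mul_zero]

lemma coeff_mul_coeff_of_nonneg (hf : IsMutation h f g) (hf' : IsMutation h f' g') {b c : ℤ}
    (hbc : 0 ≤ b + c) :
    g.coeff b * g'.coeff c = h ^ (b + c).toNat * (f.coeff b * f'.coeff c) := by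
  rcases le_or_gt 0 b with hb | hb <;> rcases le_or_gt 0 c with hc | hc
  · rw [hf.1 b hb, hf'.1 c hc, show (b + c).toNat = b.toNat + c.toNat by omega, pow_add]
    ring
  · rw [hf.1 b hb, hf'.2 c hc, show b.toNat = (b + c).toNat + (-c).toNat by omega, pow_add]
    ring
  · rw [hf.2 b hb, hf'.1 c hc, show c.toNat = (b + c).toNat + (-b).toNat by omega, pow_add]
    ring
  · omega

lemma coeff_mul_coeff_of_neg (hf : IsMutation h f g) (hf' : IsMutation h f' g') {b c : ℤ}
    (hbc : b + c < 0) :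
    f.coeff b * f'.coeff c = h ^ (-(b + c)).toNat * (g.coeff b * g'.coeff c) := by
  rcases le_or_gt 0 b with hb | hb <;> rcases le_or_gt 0 c with hc | hc
  · omega
  · rw [hf.1 b hb, hf'.2 c hc, show (-c).toNat = (-(b + c)).toNat + b.toNat by omega, pow_add]
    ring
  · rw [hf.2 b hb, hf'.1 c hc, show (-b).toNat = (-(b + c)).toNat + c.toNat by omega, pow_add]
    ring
  · rw [hf.2 b hb, hf'.2 c hc, show (-(b + c)).toNat = (-b).toNat + (-c).toNat by omega,
      pow_add]
    ring

lemma mul (hf : IsMutation h f g) (hf' : IsMutation h f' g') :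
    IsMutation h (f * f') (g * g') := by
  set s := f.coeff.support ∪ g.coeff.support
  have hfs := f.coeff_mul_eq_sum_of_support_subset f' (Finset.subset_union_left : _ ⊆ s)
  have hgs := g.coeff_mul_eq_sum_of_support_subset g' (Finset.subset_union_right : _ ⊆ s)
  refine ⟨fun a ha => ?_, fun a ha => ?_⟩
  · rw [hfs, hgs, Finset.mul_sum]
    refine Finset.sum_congr rfl fun b _ => ?_
    simpa using hf.coeff_mul_coeff_of_nonneg hf' (b := b) (c := -b + a) (by omega)
  · rw [hfs, hgs, Finset.mul_sum]
    refine Finset.sum_congr rfl fun b _ => ?_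
    simpa using hf.coeff_mul_coeff_of_neg hf' (b := b) (c := -b + a) (by omega)

lemma pow (hf : IsMutation h f g) (N : ℕ) : IsMutation h (f ^ N) (g ^ N) := by
  induction N with
  | zero => simpa using one
  | succ N ih => simpa [pow_succ] using ih.mul hf

lemma coeff_zero (hf : IsMutation h f g) : g.coeff 0 = f.coeff 0 := by
  simpa using hf.1 0 le_rfl

end IsMutation

/-- Invariance of the classical period under a one-step mutation.  Laurent polynomials in
`x₁,…,x_n` are modelled as Laurent polynomials in `x_n` (the outer variable, exponents in
`ℤ`) with coefficients Laurent polynomials in the remaining `m = n - 1` variables.  If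
`f = ∑ Cᵢ x_nⁱ`, `h` is a Laurent polynomial in `x₁,…,x_{n-1}` such that `h^{-i}` divides
`Cᵢ` for every `i < 0`, and `g = ∑ hⁱ Cᵢ x_nⁱ` (so `g i = h^i * f i` for `i ≥ 0` and
`f i = h^{-i} * g i` for `i < 0`), then the constant terms of `g ^ N` and `f ^ N` agree
for all `N`. -/
theorem stmt_6 (m : ℕ)
    (f g : AddMonoidAlgebra (AddMonoidAlgebra ℂ (Fin m → ℤ)) ℤ)
    (h : AddMonoidAlgebra ℂ (Fin m → ℤ))
    (hpos : ∀ i : ℤ, 0 ≤ i → g.coeff i = h ^ i.toNat * f.coeff i)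
    (hneg : ∀ i : ℤ, i < 0 → f.coeff i = h ^ (-i).toNat * g.coeff i) :
    ∀ N : ℕ, ((g ^ N).coeff 0).coeff 0 = ((f ^ N).coeff 0).coeff 0 := fun N => by
  rw [(IsMutation.pow ⟨hpos, hneg⟩ N).coeff_zero]
end

section
/- Let $G$ be a finite directed graph with vertex set $\{0, 1, \dots, l\}$, and to each arrow $a$ associate $D_a = e_{t(a)} - e_{s(a)} \in \mathbb{Q}^l$ with $e_0 := 0$. Let $S$ be a set of arrows and $v \ne 0$ a vertex such that $e_v$ lies in the nonnegative rational span of $\{D_a : a \in S\}$. Then $S$ contains the arrow set of a directed path from $0$ to $v$. -/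
/-!
Let `R` be the set of vertices reachable from `0` along arrows of `S`, and suppose `v ∉ R`.
Summing coordinates over the complement `T` of `R` is a linear functional sending `e v` to `1`,
while it sends every `D a` with `a ∈ S` to `[t a ∈ T] - [s a ∈ T] ≤ 0`, because no arrow of `S`
leaves `R`. So `e v` cannot lie in the cone spanned by these `D a`; hence `v ∈ R`, and a
witness of reachability unfolds into a directed path.
-/

open Relation

section ArrowPaths

variable {V A : Type*}

def ArrowRel (s t : A → V) (S : Finset A) (x y : V) : Prop :=
  ∃ a ∈ S, s a = x ∧ t a = y

theorem exists_path_of_reflTransGen {s t : A → V} {S : Finset A} {u w : V}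
    (h : ReflTransGen (ArrowRel s t S) u w) (huw : u ≠ w) :
    ∃ (n : ℕ) (p : Fin (n + 1) → A),
      s (p 0) = u ∧ t (p (Fin.last n)) = w ∧
      (∀ i : Fin n, t (p i.castSucc) = s (p i.succ)) ∧
      (∀ i, p i ∈ S) := by
  induction h with
  | refl => exact absurd rfl huw
  | @tail x y hux hxy ih =>
    obtain ⟨a, ha, rfl, rfl⟩ := hxy
    by_cases hxu : s a = u
    · exact ⟨0, fun _ => a, hxu, rfl, fun i => i.elim0, fun _ => ha⟩
    obtain ⟨n, p, h0, hlast, hchain, hmem⟩ := ih (Ne.symm hxu)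
    refine ⟨n + 1, Fin.snoc p a, ?_, by rw [Fin.snoc_last], ?_, ?_⟩
    · rw [← Fin.castSucc_zero, Fin.snoc_castSucc, h0]
    · refine Fin.lastCases ?_ fun j => ?_
      · rw [Fin.snoc_castSucc, Fin.succ_last, Fin.snoc_last, hlast]
      · rw [Fin.snoc_castSucc, Fin.succ_castSucc, Fin.snoc_castSucc, hchain j]
    · refine Fin.lastCases ?_ fun j => ?_
      · rwa [Fin.snoc_last]
      · rw [Fin.snoc_castSucc]; exact hmem j

variable [DecidableEq V]

def unitOrZero (z u : V) : V → ℚ :=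
  if u = z then 0 else Pi.single u 1

theorem sum_unitOrZero_apply {z : V} {T : Finset V} (hz : z ∉ T) (u : V) :
    ∑ w ∈ T, unitOrZero z u w = if u ∈ T then 1 else 0 := by
  by_cases hu : u = z
  · subst hu
    simp [unitOrZero, hz]
  · simp [unitOrZero, hu, Pi.single_apply]

theorem sum_apply_cone_nonpos {s t : A → V} {S : Finset A} {z : V} {T : Finset V}
    (hz : z ∉ T) (hT : ∀ a ∈ S, s a ∉ T → t a ∉ T) {c : A → ℚ} (hc : ∀ a, 0 ≤ c a) :
    ∑ w ∈ T, (∑ a ∈ S, c a • (unitOrZero z (t a) - unitOrZero z (s a))) w ≤ 0 := by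
  simp only [Finset.sum_apply, Pi.smul_apply, Pi.sub_apply, smul_eq_mul]
  rw [Finset.sum_comm]
  refine Finset.sum_nonpos fun a ha => ?_
  rw [← Finset.mul_sum, Finset.sum_sub_distrib, sum_unitOrZero_apply hz,
    sum_unitOrZero_apply hz]
  refine mul_nonpos_of_nonneg_of_nonpos (hc a) ?_
  by_cases hs : s a ∈ T
  · split_ifs <;> norm_num
  · simp [hs, hT a ha hs]

theorem reflTransGen_of_unitOrZero_mem_cone [Fintype V] (s t : A → V) (S : Finset A)
    {z v : V} (c : A → ℚ) (hc : ∀ a, 0 ≤ c a)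
    (hspan : unitOrZero z v = ∑ a ∈ S, c a • (unitOrZero z (t a) - unitOrZero z (s a))) :
    ReflTransGen (ArrowRel s t S) z v := by
  classical
  by_contra hnv
  set T := Finset.univ.filter fun w => ¬ReflTransGen (ArrowRel s t S) z w
  have hzT : z ∉ T := by simp [T, ReflTransGen.refl]
  have hT : ∀ a ∈ S, s a ∉ T → t a ∉ T := by
    intro a ha hs
    simp only [T, Finset.mem_filter, Finset.mem_univ, true_and, not_not] at hs ⊢
    exact hs.tail ⟨a, ha, rfl, rfl⟩
  have hvT : v ∈ T := by simpa [T] using hnv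
  have hone : ∑ w ∈ T, unitOrZero z v w = 1 := by
    rw [sum_unitOrZero_apply hzT, if_pos hvT]
  have hcut := sum_apply_cone_nonpos (s := s) (t := t) hzT hT hc
  rw [← hspan, hone] at hcut
  norm_num at hcut

end ArrowPaths

theorem stmt_11_general (l : ℕ) (A : Type*)
    (s t : A → Fin (l + 1))
    (ε : Fin (l + 1) → (Fin (l + 1) → ℚ))
    (hε : ε = fun v => if v = 0 then 0 else Pi.single v 1)
    (v : Fin (l + 1)) (hv : v ≠ 0)
    (S : Finset A)
    (c : A → ℚ) (hc : ∀ a, 0 ≤ c a)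
    (hspan : ε v = ∑ a ∈ S, c a • (ε (t a) - ε (s a))) :
    ∃ (n : ℕ) (p : Fin (n + 1) → A),
      s (p 0) = 0 ∧ t (p (Fin.last n)) = v ∧
      (∀ i : Fin n, t (p i.castSucc) = s (p i.succ)) ∧
      (∀ i, p i ∈ S) := by
  subst hε
  exact exists_path_of_reflTransGen
    (reflTransGen_of_unitOrZero_mem_cone s t S c hc hspan) hv.symm

/-- Let `G` be a finite directed graph with vertices `Fin (l+1)` (vertex `0` the source),
arrows a type `A` with source and target maps `s, t`, and arrow weights
`D a = ε (t a) - ε (s a)` where `ε 0 = 0` and `ε v` is a standard basis vector otherwise.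
If `S` is a set of arrows and `v ≠ 0` a vertex with `ε v` in the nonnegative rational span
of `{D a : a ∈ S}`, then `S` contains the arrow set of a directed path from `0` to `v`. -/
theorem stmt_11 (l : ℕ) (A : Type*) [Fintype A] [DecidableEq A]
    (s t : A → Fin (l + 1))
    (ε : Fin (l + 1) → (Fin (l + 1) → ℚ))
    (hε : ε = fun v => if v = 0 then 0 else Pi.single v 1)
    (v : Fin (l + 1)) (hv : v ≠ 0)
    (S : Finset A)
    (c : A → ℚ) (hc : ∀ a, 0 ≤ c a)
    (hspan : ε v = ∑ a ∈ S, c a • (ε (t a) - ε (s a))) :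
    ∃ (n : ℕ) (p : Fin (n + 1) → A),
      s (p 0) = 0 ∧ t (p (Fin.last n)) = v ∧
      (∀ i : Fin n, t (p i.castSucc) = s (p i.succ)) ∧
      (∀ i, p i ∈ S) :=
  stmt_11_general l A s t ε hε v hv S c hc hspan
end

section
/- Let $n \ge 2$ and consider the generic $2 \times n$ matrix with entries $x_{ij}$, $i \in \{1,2\}$, $j \in \{1,\dots,n\}$, with lexicographic order induced by $x_{11} > \cdots > x_{1n} > x_{21} > \cdots > x_{2n}$. Let $A \subseteq k[x_{ij}]$ be the subalgebra generated by the $2 \times 2$ minors $p_{ij} = x_{1i} x_{2j} - x_{1j} x_{2i}$ ($i < j$). Then for every nonzero $f \in A$, the lex-leading monomial of $f$ is a product of monomials from the set $\{x_{1i} x_{2j} : i < j\}$; i.e., the minors $p_{ij}$ form a SAGBI basis of $A$. -/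
/-!
Every product of minors `p i j` (`i < j`) has lex-leading monomial the product of the diagonal
terms `x 1 i * x 2 j`, because the diagonal term of a single minor beats the antidiagonal one.
The Plücker relation `p a b * p c d = p a d * p c b - p a c * p d b` straightens a product
containing a nested pair of columns `a < c < d < b` into two products with strictly smaller
sum of squared column lengths, so the subalgebra is spanned by the standard products, those whose
columns form a chain for the componentwise order. A chain of columns is recovered from its two
rows, so standard products have pairwise distinct leading monomials, and the leading monomial of
a linear combination of them is that of one of them.
-/

open MvPolynomial MonomialOrder
open scoped MonomialOrder

theorem MonomialOrder.degree_mem_image_of_mem_span {σ R : Type*} [CommSemiring R]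
    [NoZeroDivisors R] (m : MonomialOrder σ) {s : Set (MvPolynomial σ R)} (hs₀ : 0 ∉ s)
    (hs : s.InjOn m.degree) {f : MvPolynomial σ R} (hf : f ∈ Submodule.span R s)
    (hf₀ : f ≠ 0) : m.degree f ∈ m.degree '' s := by
  classical
  obtain ⟨c, hcs, rfl⟩ := Submodule.mem_span_set.mp hf
  have hc : c.support.Nonempty :=
    Finset.nonempty_iff_ne_empty.mpr fun h => hf₀ (by simp [Finsupp.support_eq_empty.mp h])
  obtain ⟨g, hg, hg_max⟩ := c.support.exists_max_image (fun g => m.toSyn (m.degree g)) hc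
  have hg₀ : g ≠ 0 := fun h => hs₀ (h ▸ hcs hg)
  have hlt : ∀ g' ∈ c.support, g' ≠ g → m.degree g' ≺[m] m.degree g := fun g' hg' hne =>
    (hg_max g' hg').lt_of_ne fun h => hne (hs (hcs hg') (hcs hg) (m.toSyn.injective h))
  have hcoeff : coeff (m.degree g) (c.sum fun g r => r • g) ≠ 0 := by
    rw [Finsupp.sum, coeff_sum, Finset.sum_eq_single g
      (fun g' hg' hne => by rw [coeff_smul, m.coeff_eq_zero_of_lt (hlt g' hg' hne), smul_zero])
      (fun h => absurd hg h), coeff_smul, smul_eq_mul]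
    exact mul_ne_zero (Finsupp.mem_support_iff.mp hg) (m.coeff_degree_ne_zero_iff.mpr hg₀)
  have hvanish : ∀ e, m.degree g ≺[m] e → coeff e (c.sum fun g r => r • g) = 0 := by
    intro e he
    rw [Finsupp.sum, coeff_sum]
    refine Finset.sum_eq_zero fun g' hg' => ?_
    rw [coeff_smul, m.coeff_eq_zero_of_lt ((hg_max g' hg').trans_lt he), smul_zero]
  refine ⟨g, hcs hg, m.toSyn.injective (le_antisymm (m.le_degree (mem_support_iff.mpr hcoeff))
    (m.degree_le_iff.mpr fun e he => not_lt.mp fun h => mem_support_iff.mp he (hvanish e h)))⟩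

namespace Multiset

theorem exists_forall_le_of_isChain {α : Type*} [Preorder α] {S : Multiset α}
    (hS : IsChain (· ≤ ·) {x | x ∈ S}) (hS₀ : S ≠ 0) : ∃ c ∈ S, ∀ x ∈ S, x ≤ c := by
  classical
  obtain ⟨c, hc⟩ := S.toFinset.exists_maximal (by simpa using hS₀)
  have hcS : c ∈ S := mem_toFinset.mp hc.prop
  refine ⟨c, hcS, fun x hx => ?_⟩
  rcases hS.total hx hcS with h | h
  · exact h
  · exact hc.le_of_ge (mem_toFinset.mpr hx) h

theorem isGreatest_map_of_forall_le {α γ : Type*} [Preorder α] [Preorder γ]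
    {f : α → γ} (hf : Monotone f) {U : Multiset α} {u : α} (hu : u ∈ U)
    (hU : ∀ x ∈ U, x ≤ u) : IsGreatest {y | y ∈ U.map f} (f u) := by
  refine ⟨mem_map_of_mem f hu, ?_⟩
  rintro _ hy
  obtain ⟨x, hx, rfl⟩ := mem_map.mp hy
  exact hf (hU x hx)

theorem eq_of_isChain_of_map_fst_eq_of_map_snd_eq {α β : Type*} [LinearOrder α]
    [LinearOrder β] {S T : Multiset (α × β)} (hS : IsChain (· ≤ ·) {x | x ∈ S})
    (hT : IsChain (· ≤ ·) {x | x ∈ T}) (h₁ : S.map Prod.fst = T.map Prod.fst)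
    (h₂ : S.map Prod.snd = T.map Prod.snd) : S = T := by
  classical
  induction hN : S.card generalizing S T with
  | zero =>
    rw [card_eq_zero.mp hN, map_zero, eq_comm, map_eq_zero] at h₁
    rw [card_eq_zero.mp hN, h₁]
  | succ N ih =>
    have hS₀ : S ≠ 0 := by rintro rfl; simp at hN
    have hT₀ : T ≠ 0 := by rintro rfl; simp_all
    obtain ⟨c, hcS, hc⟩ := exists_forall_le_of_isChain hS hS₀
    obtain ⟨c', hcT, hc'⟩ := exists_forall_le_of_isChain hT hT₀
    have hfst := isGreatest_map_of_forall_le monotone_fst hcT hc'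
    have hsnd := isGreatest_map_of_forall_le monotone_snd hcT hc'
    rw [← h₁] at hfst
    rw [← h₂] at hsnd
    obtain rfl : c = c' := Prod.ext
      ((isGreatest_map_of_forall_le monotone_fst hcS hc).unique hfst)
      ((isGreatest_map_of_forall_le monotone_snd hcS hc).unique hsnd)
    have herase : S.erase c = T.erase c := by
      refine ih (hS.mono fun x hx => mem_of_mem_erase hx)
        (hT.mono fun x hx => mem_of_mem_erase hx) ?_ ?_ ?_
      · rw [map_erase_of_mem _ _ hcS, map_erase_of_mem _ _ hcT, h₁]
      · rw [map_erase_of_mem _ _ hcS, map_erase_of_mem _ _ hcT, h₂]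
      · rw [card_erase_of_mem hcS, hN, Nat.pred_succ]
    rw [← cons_erase hcS, ← cons_erase hcT, herase]

theorem exists_eq_cons_cons_of_not_isChain {α β : Type*} [LinearOrder α] [LinearOrder β]
    {S : Multiset (α × β)} (hS : ¬ IsChain (· ≤ ·) {x | x ∈ S}) :
    ∃ a b R, S = a ::ₘ b ::ₘ R ∧ a.1 < b.1 ∧ b.2 < a.2 := by
  classical
  obtain ⟨x, hx, y, hy, hxy, hinc⟩ : ∃ x ∈ S, ∃ y ∈ S, x ≠ y ∧ ¬ (x ≤ y ∨ y ≤ x) := by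
    simpa [IsChain, Set.Pairwise] using hS
  have hcons : ∀ {u v : α × β}, u ∈ S → v ∈ S → u ≠ v → S = u ::ₘ v ::ₘ (S.erase u).erase v :=
    fun hu hv huv => by
      rw [cons_erase ((mem_erase_of_ne huv.symm).mpr hv), cons_erase hu]
  simp only [Prod.le_def, not_or, not_and_or, not_le] at hinc
  rcases lt_or_gt_of_ne (show x.1 ≠ y.1 by grind) with h | h
  · exact ⟨x, y, _, hcons hx hy hxy, h, by grind⟩
  · exact ⟨y, x, _, hcons hy hx hxy.symm, h, by grind⟩

end Multiset

theorem Nat.sq_sub_add_sq_sub_lt {p q r s : ℕ} (hpq : p < q) (hqr : q < r) (hrs : r < s) :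
    (r - p) ^ 2 + (s - q) ^ 2 < (s - p) ^ 2 + (r - q) ^ 2 ∧
      (q - p) ^ 2 + (s - r) ^ 2 < (s - p) ^ 2 + (r - q) ^ 2 := by
  zify [hpq.le, hqr.le, hrs.le, (hpq.trans hqr).le, (hqr.trans hrs).le,
    (hpq.trans (hqr.trans hrs)).le]
  have hqp : (0 : ℤ) < q - p := by omega
  have hrq : (0 : ℤ) < r - q := by omega
  have hsr : (0 : ℤ) < s - r := by omega
  constructor <;> nlinarith [mul_pos hqp hsr, mul_pos hqp hrq, mul_pos hrq hsr]

namespace GrTwo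

variable (k : Type*) [CommRing k] {n : ℕ}

noncomputable def minor (i j : Fin n) : MvPolynomial (Lex (Fin 2 × Fin n)) k :=
  X (toLex (0, i)) * X (toLex (1, j)) - X (toLex (0, j)) * X (toLex (1, i))

noncomputable def minorProd (S : Multiset (Fin n × Fin n)) :
    MvPolynomial (Lex (Fin 2 × Fin n)) k :=
  (S.map fun c => minor k c.1 c.2).prod

variable {k}

noncomputable def diagExponent (c : Fin n × Fin n) : Lex (Fin 2 × Fin n) →₀ ℕ :=
  Finsupp.single (toLex (0, c.1)) 1 + Finsupp.single (toLex (1, c.2)) 1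

/-- `S` is the multiset of columns of a semistandard tableau with two rows. -/
def IsStandard (S : Multiset (Fin n × Fin n)) : Prop :=
  (∀ c ∈ S, c.1 < c.2) ∧ IsChain (· ≤ ·) {c | c ∈ S}

def sumSqLength (S : Multiset (Fin n × Fin n)) : ℕ :=
  (S.map fun c => ((c.2 : ℕ) - c.1) ^ 2).sum

@[simp]
theorem minorProd_cons (c : Fin n × Fin n) (S : Multiset (Fin n × Fin n)) :
    minorProd k (c ::ₘ S) = minor k c.1 c.2 * minorProd k S := by
  simp [minorProd]

theorem minorProd_add (S T : Multiset (Fin n × Fin n)) :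
    minorProd k (S + T) = minorProd k S * minorProd k T := by
  simp [minorProd]

@[simp]
theorem sumSqLength_cons (c : Fin n × Fin n) (S : Multiset (Fin n × Fin n)) :
    sumSqLength (c ::ₘ S) = ((c.2 : ℕ) - c.1) ^ 2 + sumSqLength S := by
  simp [sumSqLength]

theorem diagExponent_swap_lt {i j : Fin n} (hij : i < j) :
    toLex (diagExponent (j, i)) < toLex (diagExponent (i, j)) := by
  refine Finsupp.Lex.lt_iff.mpr ⟨toLex (0, i), fun y hy => ?_, ?_⟩
  · have hne : ∀ p : Fin 2 × Fin n, toLex (0, i) ≤ toLex p → toLex p ≠ y :=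
      fun p hp h => (h ▸ hp).not_gt hy
    simp [diagExponent, hne (0, i), hne (0, j), hne (1, i), hne (1, j),
      Prod.Lex.toLex_le_toLex, hij.le]
  · simp [diagExponent, hij.ne']

section IsDomain

variable [IsDomain k]

theorem degree_minor {i j : Fin n} (hij : i < j) :
    lex.degree (minor k i j) = diagExponent (i, j) := by
  have hdiag : ∀ a b : Fin n,
      lex.degree (X (toLex (0, a)) * X (toLex (1, b)) : MvPolynomial _ k) = diagExponent (a, b) :=
    fun a b => by rw [degree_mul (X_ne_zero _) (X_ne_zero _), degree_X, degree_X, diagExponent]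
  rw [minor, degree_sub_of_lt (by rw [hdiag, hdiag]; exact diagExponent_swap_lt hij), hdiag]

theorem minor_ne_zero {i j : Fin n} (hij : i < j) : minor k i j ≠ 0 :=
  lex.ne_zero_of_degree_ne_zero (by simp [degree_minor hij, diagExponent])

theorem minorProd_ne_zero {S : Multiset (Fin n × Fin n)} (hS : ∀ c ∈ S, c.1 < c.2) :
    minorProd k S ≠ 0 :=
  Multiset.prod_ne_zero fun h => by
    obtain ⟨c, hc, h0⟩ := Multiset.mem_map.mp h
    exact minor_ne_zero (hS c hc) h0

theorem degree_minorProd {S : Multiset (Fin n × Fin n)} (hS : ∀ c ∈ S, c.1 < c.2) :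
    lex.degree (minorProd k S) = (S.map diagExponent).sum := by
  induction S using Multiset.induction_on with
  | empty => simp [minorProd]
  | cons c S ih =>
    have hS' : ∀ c ∈ S, c.1 < c.2 := fun c' hc' => hS c' (Multiset.mem_cons_of_mem hc')
    have hc := hS c (Multiset.mem_cons_self c S)
    rw [minorProd_cons, degree_mul (minor_ne_zero hc) (minorProd_ne_zero hS'), ih hS',
      degree_minor hc, Multiset.map_cons, Multiset.sum_cons]

end IsDomain

theorem sum_diagExponent_apply_zero (S : Multiset (Fin n × Fin n)) (i : Fin n) :
    (S.map diagExponent).sum (toLex (0, i)) = (S.map Prod.fst).count i := by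
  induction S using Multiset.induction_on with
  | empty => simp
  | cons c S ih => simp [ih, diagExponent, Finsupp.single_apply, Multiset.count_cons, eq_comm,
      add_comm]

theorem sum_diagExponent_apply_one (S : Multiset (Fin n × Fin n)) (j : Fin n) :
    (S.map diagExponent).sum (toLex (1, j)) = (S.map Prod.snd).count j := by
  induction S using Multiset.induction_on with
  | empty => simp
  | cons c S ih => simp [ih, diagExponent, Finsupp.single_apply, Multiset.count_cons, eq_comm,
      add_comm]

theorem eq_of_isChain_of_sum_diagExponent_eq {S T : Multiset (Fin n × Fin n)}
    (hS : IsChain (· ≤ ·) {c | c ∈ S}) (hT : IsChain (· ≤ ·) {c | c ∈ T})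
    (h : (S.map diagExponent).sum = (T.map diagExponent).sum) : S = T := by
  classical
  refine Multiset.eq_of_isChain_of_map_fst_eq_of_map_snd_eq hS hT
    (Multiset.ext.mpr fun i => ?_) (Multiset.ext.mpr fun j => ?_)
  · rw [← sum_diagExponent_apply_zero, h, sum_diagExponent_apply_zero]
  · rw [← sum_diagExponent_apply_one, h, sum_diagExponent_apply_one]

theorem degree_injOn_standard [IsDomain k] :
    Set.InjOn lex.degree (minorProd k '' {S : Multiset (Fin n × Fin n) | IsStandard S}) := by
  rintro _ ⟨S, hS, rfl⟩ _ ⟨T, hT, rfl⟩ h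
  rw [degree_minorProd hS.1, degree_minorProd hT.1] at h
  rw [eq_of_isChain_of_sum_diagExponent_eq hS.2 hT.2 h]

theorem minor_mul_minor (a b c d : Fin n) :
    minor k a b * minor k c d = minor k a d * minor k c b - minor k a c * minor k d b := by
  simp only [minor]
  ring

theorem minorProd_cons_cons (a b : Fin n × Fin n) (R : Multiset (Fin n × Fin n)) :
    minorProd k (a ::ₘ b ::ₘ R) = minorProd k ((a.1, b.2) ::ₘ (b.1, a.2) ::ₘ R)
      - minorProd k ((a.1, b.1) ::ₘ (b.2, a.2) ::ₘ R) := by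
  simp only [minorProd_cons, ← mul_assoc, minor_mul_minor a.1 a.2 b.1 b.2, sub_mul]

theorem minorProd_mem_span_standard {S : Multiset (Fin n × Fin n)} (hS : ∀ c ∈ S, c.1 < c.2) :
    minorProd k S ∈ Submodule.span k (minorProd k '' {T | IsStandard T}) := by
  induction hN : sumSqLength S using Nat.strong_induction_on generalizing S with
  | _ N ih =>
  by_cases hchain : IsChain (· ≤ ·) {c | c ∈ S}
  · exact Submodule.subset_span ⟨S, ⟨hS, hchain⟩, rfl⟩
  obtain ⟨a, b, R, rfl, hab₁, hab₂⟩ := Multiset.exists_eq_cons_cons_of_not_isChain hchain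
  have hb := hS b (by simp)
  have hR : ∀ c ∈ R, c.1 < c.2 := fun c hc => hS c (by simp [hc])
  have hlt := Nat.sq_sub_add_sq_sub_lt (Fin.lt_def.mp hab₁) (Fin.lt_def.mp hb)
    (Fin.lt_def.mp hab₂)
  rw [minorProd_cons_cons]
  refine Submodule.sub_mem _ (ih _ ?_ ?_ rfl) (ih _ ?_ ?_ rfl)
  · simp only [sumSqLength_cons] at hN ⊢
    omega
  · simp only [Multiset.mem_cons]
    rintro c (rfl | rfl | hc)
    exacts [hab₁.trans hb, hb.trans hab₂, hR c hc]
  · simp only [sumSqLength_cons] at hN ⊢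
    omega
  · simp only [Multiset.mem_cons]
    rintro c (rfl | rfl | hc)
    exacts [hab₁, hab₂, hR c hc]

theorem mem_span_minorProd_of_mem_adjoin {f : MvPolynomial (Lex (Fin 2 × Fin n)) k}
    (hf : f ∈ Algebra.adjoin k {g | ∃ i j : Fin n, i < j ∧ g = minor k i j}) :
    f ∈ Submodule.span k (minorProd k '' {S | ∀ c ∈ S, c.1 < c.2}) := by
  rw [← Subalgebra.mem_toSubmodule, Algebra.adjoin_eq_span] at hf
  refine Submodule.span_mono (fun g hg => ?_) hf
  induction hg using Submonoid.closure_induction with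
  | mem g hg =>
    obtain ⟨i, j, hij, rfl⟩ := hg
    exact ⟨{(i, j)}, by simpa using hij, by simp [minorProd]⟩
  | one => exact ⟨0, by simp, by simp [minorProd]⟩
  | mul g h _ _ hg hh =>
    obtain ⟨S, hS, rfl⟩ := hg
    obtain ⟨T, hT, rfl⟩ := hh
    exact ⟨S + T, fun c hc => (Multiset.mem_add.mp hc).elim (hS c) (hT c), minorProd_add S T⟩

theorem mem_span_standard_of_mem_adjoin {f : MvPolynomial (Lex (Fin 2 × Fin n)) k}
    (hf : f ∈ Algebra.adjoin k {g | ∃ i j : Fin n, i < j ∧ g = minor k i j}) :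
    f ∈ Submodule.span k (minorProd k '' {S | IsStandard S}) := by
  refine Submodule.span_le.mpr ?_ (mem_span_minorProd_of_mem_adjoin hf)
  rintro _ ⟨S, hS, rfl⟩
  exact minorProd_mem_span_standard hS

end GrTwo

open GrTwo in
theorem stmt_14_general {k : Type*} [Field k] (n : ℕ)
    (A : Subalgebra k (MvPolynomial (Lex (Fin 2 × Fin n)) k))
    (hA : A = Algebra.adjoin k
      {g | ∃ i j : Fin n, i < j ∧
        g = X (toLex ((0 : Fin 2), i)) * X (toLex ((1 : Fin 2), j))
          - X (toLex ((0 : Fin 2), j)) * X (toLex ((1 : Fin 2), i))}) :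
    ∀ f ∈ A, f ≠ 0 → ∀ d ∈ f.support, (∀ e ∈ f.support, toLex e ≤ toLex d) →
      ∃ S : Multiset (Fin n × Fin n), (∀ p ∈ S, p.1 < p.2) ∧
        d = (S.map fun p => Finsupp.single (toLex ((0 : Fin 2), p.1)) 1
          + Finsupp.single (toLex ((1 : Fin 2), p.2)) 1).sum := by
  intro f hf hf₀ d hd hd_max
  have hd_deg : d = lex.degree f :=
    lex.toSyn.injective (le_antisymm (lex.le_degree hd) (lex.degree_le_iff.mpr hd_max))
  obtain ⟨_, ⟨S, hS, rfl⟩, hSf⟩ := lex.degree_mem_image_of_mem_span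
    (by rintro ⟨S, hS, h⟩; exact minorProd_ne_zero hS.1 h) degree_injOn_standard
    (mem_span_standard_of_mem_adjoin (hA ▸ hf)) hf₀
  exact ⟨S, hS.1, by rw [hd_deg, ← hSf, degree_minorProd hS.1]; rfl⟩

/-- SAGBI property for the `2 × 2` minors of the generic `2 × n` matrix (`Gr(n,2)`):
for every nonzero element `f` of the subalgebra generated by the minors
`p i j = x 1 i * x 2 j - x 1 j * x 2 i` (`i < j`), the lex-leading monomial of `f`
(with respect to `x 1 1 > ⋯ > x 1 n > x 2 1 > ⋯ > x 2 n`) is a product of the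
diagonal monomials `x 1 i * x 2 j` with `i < j`. -/
theorem stmt_14 {k : Type*} [Field k] (n : ℕ) (hn : 2 ≤ n)
    (A : Subalgebra k (MvPolynomial (Lex (Fin 2 × Fin n)) k))
    (hA : A = Algebra.adjoin k
      {g | ∃ i j : Fin n, i < j ∧
        g = X (toLex ((0 : Fin 2), i)) * X (toLex ((1 : Fin 2), j))
          - X (toLex ((0 : Fin 2), j)) * X (toLex ((1 : Fin 2), i))}) :
    ∀ f ∈ A, f ≠ 0 → ∀ d ∈ f.support, (∀ e ∈ f.support, toLex e ≤ toLex d) →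
      ∃ S : Multiset (Fin n × Fin n), (∀ p ∈ S, p.1 < p.2) ∧
        d = (S.map fun p => Finsupp.single (toLex ((0 : Fin 2), p.1)) 1
          + Finsupp.single (toLex ((1 : Fin 2), p.2)) 1).sum :=
  stmt_14_general n A hA
end
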